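/- Let G be a well-covered graph with α(G) ≥ 2 that is locally Cohen-Macaulay (i.e., G_v is Cohen-Macaulay for every vertex v) and whose independence complex Δ(G) is connected. Then Δ(G) is connected in codimension one. -/

import Mathlib

open Finset
open Classical

noncomputable section

variable {V : Type*}

/-- An (abstract) simplicial complex on `V`, given as a finite set of finite faces:
nonvoid (contains the empty face) and closed under taking subsets. -/
def IsComplex (Δ : Finset (Finset V)) : Prop :=
  ∅ ∈ Δ ∧ ∀ F ∈ Δ, ∀ H ⊆ F, H ∈ Δ

/-- The reduced Euler characteristic `χ̃(Δ) = Σ_{F ∈ Δ} (-1)^{|F| - 1}`. -/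
def chiT (Δ : Finset (Finset V)) : ℤ :=
  ∑ F ∈ Δ, (-1 : ℤ) ^ (F.card + 1)

/-- The link of a face `F` in `Δ`. -/
def link (Δ : Finset (Finset V)) (F : Finset V) : Finset (Finset V) :=
  Δ.filter (fun H => H ∪ F ∈ Δ ∧ H ∩ F = ∅)

/-- The facets (maximal faces) of `Δ`. -/
def facets (Δ : Finset (Finset V)) : Finset (Finset V) :=
  Δ.filter (fun F => ∀ H ∈ Δ, F ⊆ H → F = H)

/-- `Δ` is pure: all facets have the same cardinality. -/
def PureC (Δ : Finset (Finset V)) : Prop :=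
  ∀ F ∈ facets Δ, ∀ H ∈ facets Δ, F.card = H.card

/-- One more than the dimension of `Δ`: the maximal cardinality of a face. -/
def maxCard (Δ : Finset (Finset V)) : ℕ := Δ.sup Finset.card

/-- The dimension of `Δ` as an integer (`-1` for `Δ = {∅}`). -/
def dimC (Δ : Finset (Finset V)) : ℤ := (maxCard Δ : ℤ) - 1

/-- `Δ` is an Euler complex: pure, and every link has reduced Euler characteristic
`(-1)^{dim}` (note `(-1)^{dim lk} = (-1)^{maxCard lk + 1}`). -/
def Eulerian (Δ : Finset (Finset V)) : Prop :=
  PureC Δ ∧ ∀ F ∈ Δ, chiT (link Δ F) = (-1 : ℤ) ^ (maxCard (link Δ F) + 1)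

/-- `Δ` is semi-Eulerian: the link of each vertex is Eulerian. -/
def SemiEulerian (Δ : Finset (Finset V)) : Prop :=
  ∀ x : V, {x} ∈ Δ → Eulerian (link Δ {x})

/-- The independence complex of a graph `G`: faces are the independent sets. -/
def indepC (G : SimpleGraph V) [Fintype V] : Finset (Finset V) :=
  Finset.univ.filter (fun s => ∀ a ∈ s, ∀ b ∈ s, ¬ G.Adj a b)

/-- The independence number `α(G)`. -/
def indNum (G : SimpleGraph V) [Fintype V] : ℕ := (indepC G).sup Finset.card

/-- `G` is well-covered: every maximal independent set has cardinality `α(G)`. -/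
def WellCovered (G : SimpleGraph V) [Fintype V] : Prop :=
  ∀ s ∈ indepC G, (∀ t ∈ indepC G, s ⊆ t → s = t) → s.card = indNum G

/-- The vertex set of the localization `G_S = G \ (S ∪ N_G(S))`. -/
def locSet (G : SimpleGraph V) (S : Finset V) : Set V :=
  {v | v ∉ S ∧ ∀ u ∈ S, ¬ G.Adj v u}

/-- The localization `G_S`, as an induced subgraph. -/
def locG (G : SimpleGraph V) (S : Finset V) : SimpleGraph (locSet G S) :=
  G.induce (locSet G S)

/-- The deletion `G ∖ v`, as an induced subgraph. -/
def Gdel (G : SimpleGraph V) (v : V) : SimpleGraph {u : V // u ≠ v} :=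
  G.induce {u | u ≠ v}

/-- `G` belongs to the class `W₂`: it is well-covered and for every vertex `v`,
`G ∖ v` is well-covered with `α(G ∖ v) = α(G)`. -/
def InW2 (G : SimpleGraph V) [Fintype V] : Prop :=
  WellCovered G ∧ ∀ v : V, WellCovered (Gdel G v) ∧ indNum (Gdel G v) = indNum G

/-- `δ*(v)`: the number of non-isolated vertices of the induced subgraph `H[N_H(v)]`. -/
def deltaStarV {T : Type*} (H : SimpleGraph T) [Fintype T] (v : T) : ℕ :=
  (Finset.univ.filter (fun u => H.Adj v u ∧ ∃ w, H.Adj v w ∧ H.Adj u w)).card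

/-- `2K₂`: two disjoint edges. -/
def twoK2 : SimpleGraph (Fin 4) := SimpleGraph.fromEdgeSet {s(0, 1), s(2, 3)}

/-- The join `G * H` of two disjoint graphs. -/
def joinG {α β : Type*} (G : SimpleGraph α) (H : SimpleGraph β) : SimpleGraph (α ⊕ β) where
  Adj x y :=
    match x, y with
    | Sum.inl a, Sum.inl b => G.Adj a b
    | Sum.inr a, Sum.inr b => H.Adj a b
    | Sum.inl _, Sum.inr _ => True
    | Sum.inr _, Sum.inl _ => True
  symm := by
    constructor
    rintro (a | a) (b | b) h
    · exact G.adj_symm h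
    · trivial
    · trivial
    · exact H.adj_symm h
  loopless := by
    constructor
    rintro (a | a) h
    · exact G.irrefl h
    · exact H.irrefl h

/-- `G` is pseudo-planar: for every independent set `S`, `δ*(G_S) ≤ 5` and
`G_S` is not isomorphic to `2K₂ * 2K₂`. -/
def PseudoPlanar (G : SimpleGraph V) [Fintype V] : Prop :=
  ∀ S ∈ indepC G,
    ((locSet G S).Nonempty → ∃ v : locSet G S, deltaStarV (locG G S) v ≤ 5) ∧
    IsEmpty (locG G S ≃g joinG twoK2 twoK2)

/-- `H` is a minor of `G`: there are disjoint nonempty connected branch sets in `G`,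
one for each vertex of `H`, with edges between branch sets of adjacent vertices. -/
def IsMinor {α β : Type*} (H : SimpleGraph β) (G : SimpleGraph α) : Prop :=
  ∃ B : β → Set α,
    (∀ u, (B u).Nonempty) ∧ (∀ u, (G.induce (B u)).Connected) ∧
    (∀ u w, u ≠ w → Disjoint (B u) (B w)) ∧
    (∀ u w, H.Adj u w → ∃ x ∈ B u, ∃ y ∈ B w, G.Adj x y)

def K5 : SimpleGraph (Fin 5) := ⊤

def K33 : SimpleGraph (Fin 3 ⊕ Fin 3) := completeBipartiteGraph (Fin 3) (Fin 3)

/-- Planarity via Wagner's theorem: no `K₅` minor and no `K_{3,3}` minor. -/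
def Planar (G : SimpleGraph V) : Prop := ¬ IsMinor K5 G ∧ ¬ IsMinor K33 G

/-- The 5-cycle on `Fin 5`. -/
def C5 : SimpleGraph (Fin 5) :=
  SimpleGraph.fromEdgeSet {s(0, 1), s(1, 2), s(2, 3), s(3, 4), s(4, 0)}

/-- A pentagon (5-cycle) with exactly one chord. -/
def pentChord : SimpleGraph (Fin 5) :=
  SimpleGraph.fromEdgeSet {s(0, 1), s(1, 2), s(2, 3), s(3, 4), s(4, 0), s(1, 3)}

/-- The bowtie: two triangles sharing exactly one vertex. -/
def bowtie : SimpleGraph (Fin 5) :=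
  SimpleGraph.fromEdgeSet {s(0, 1), s(1, 2), s(2, 0), s(1, 3), s(3, 4), s(4, 1)}

/-- The possible chords of the 5-cycle `C5`. -/
def chordSet : Finset (Sym2 (Fin 5)) := {s(0, 2), s(0, 3), s(1, 3), s(1, 4), s(2, 4)}

/-- The simplicial boundary map on chains (with coefficients in `k`),
sending `e_F ↦ Σ_{v ∈ F} (-1)^{pos of v in F} e_{F ∖ v}`. -/
def bdry (k : Type*) [Field k] [LinearOrder V] : (Finset V →₀ k) →ₗ[k] (Finset V →₀ k) :=
  Finsupp.lsum k fun F => (LinearMap.id : k →ₗ[k] k).smulRight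
    (∑ v ∈ F, ((-1 : k) ^ (F.filter (fun w => w < v)).card) • Finsupp.single (F.erase v) (1 : k))

/-- The submodule of `c`-chains of `Δ`: spanned by basis elements of faces of cardinality `c`. -/
def chainsSub (k : Type*) [Field k] (Δ : Finset (Finset V)) (c : ℕ) :
    Submodule k (Finset V →₀ k) :=
  Submodule.span k {x | ∃ F ∈ Δ, F.card = c ∧ x = Finsupp.single F (1 : k)}

/-- Vanishing of the reduced simplicial homology `H̃_{c-1}(Δ; k)`:
every cycle supported on faces of cardinality `c` is a boundary. -/
def HVanish (k : Type*) [Field k] [LinearOrder V] (Δ : Finset (Finset V)) (c : ℕ) : Prop :=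
  ∀ ω ∈ chainsSub k Δ c, bdry k ω = 0 → ∃ η ∈ chainsSub k Δ (c + 1), bdry k η = ω

/-- Cohen–Macaulayness of `Δ` over `k`, via Reisner's criterion:
`H̃_i(lk_Δ F; k) = 0` for all faces `F` and all `i < dim lk_Δ F`. -/
def IsCM (k : Type*) [Field k] [LinearOrder V] (Δ : Finset (Finset V)) : Prop :=
  ∀ F ∈ Δ, ∀ c : ℕ, (c : ℤ) - 1 < dimC (link Δ F) → HVanish k (link Δ F) c

/-- The core of `Δ`: the restriction of `Δ` to the vertices `x` with `st_Δ(x) ≠ Δ`. -/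
def coreC (Δ : Finset (Finset V)) : Finset (Finset V) :=
  Δ.filter (fun F => ∀ x ∈ F, ∃ H ∈ Δ, H ∪ {x} ∉ Δ)

/-- Gorensteinness of `Δ` over `k`, via Stanley's criterion:
`core Δ` is a Cohen–Macaulay Euler complex. -/
def IsGor (k : Type*) [Field k] [LinearOrder V] (Δ : Finset (Finset V)) : Prop :=
  IsCM k (coreC Δ) ∧ Eulerian (coreC Δ)

/-- Connectedness of `Δ` (all vertices of `V` being vertices of `Δ`):
its 1-skeleton graph is connected. -/
def ComplexConnected (Δ : Finset (Finset V)) : Prop :=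
  (SimpleGraph.fromRel fun a b => ({a, b} : Finset V) ∈ Δ).Connected

/-- `Δ` is connected in codimension one. -/
def ConnCodimOne (Δ : Finset (Finset V)) : Prop :=
  ∀ F ∈ facets Δ, ∀ H ∈ facets Δ,
    Relation.ReflTransGen
      (fun A B => A ∈ facets Δ ∧ B ∈ facets Δ ∧ (A ∩ B).card = maxCard Δ - 1) F H

/-- The graph obtained from `H` and a vertex `x` by adding new vertices `a, b, c`
(coded `0, 1, 2 : Fin 3`), joining `a` to `b` and to every neighbor of `x`,
`b` to `c`, and `c` to `x`. -/
def extGraph (H : SimpleGraph V) (x : V) : SimpleGraph (V ⊕ Fin 3) :=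
  SimpleGraph.fromRel fun p q =>
    match p, q with
    | Sum.inl u, Sum.inl w => H.Adj u w
    | Sum.inl u, Sum.inr i => (i = 0 ∧ H.Adj u x) ∨ (i = 2 ∧ u = x)
    | Sum.inr i, Sum.inr j => (i = 0 ∧ j = 1) ∨ (i = 1 ∧ j = 2)
    | Sum.inr _, Sum.inl _ => False

end

/-! Well-coveredness makes `Δ = Δ(G)` pure of dimension `α(G) - 1`. A pure complex is connected
in codimension one once the link of every face of codimension at least two is connected (the empty
face, whose link is `Δ`, included): by induction on the dimension the vertex links are connected in
codimension one, so any two facets through a common vertex are joined, and an edge path between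
vertices of two facets then joins the facets themselves. For a nonempty independent set `A ∋ v`,
`lk_Δ A` is a copy of the link of `A ∖ v` in `Δ(G_v)`, whose `H̃₀` vanishes by Reisner's criterion
for `G_v` as soon as that link has dimension at least one. -/

section Complex

variable {V : Type*} {Δ : Finset (Finset V)}

@[simp]
lemma mem_link {F H : Finset V} : H ∈ link Δ F ↔ H ∈ Δ ∧ H ∪ F ∈ Δ ∧ H ∩ F = ∅ := by
  simp [link]

lemma mem_facets {F : Finset V} : F ∈ facets Δ ↔ F ∈ Δ ∧ ∀ H ∈ Δ, F ⊆ H → F = H := by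
  simp [facets]

@[simp]
lemma link_empty : link Δ ∅ = Δ := by
  ext; simp

lemma IsComplex.link (hc : IsComplex Δ) {F : Finset V} (hF : F ∈ Δ) :
    IsComplex (link Δ F) := by
  refine ⟨by simpa using ⟨hc.1, hF⟩, fun H hH H' hH' => ?_⟩
  rw [mem_link] at hH ⊢
  refine ⟨hc.2 H hH.1 H' hH', hc.2 _ hH.2.1 _ (union_subset_union_left hH'), ?_⟩
  exact subset_empty.1 (hH.2.2 ▸ inter_subset_inter_right hH')

lemma link_link (hc : IsComplex Δ) {F A : Finset V} (hA : A ∈ link Δ F) :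
    link (link Δ F) A = link Δ (A ∪ F) := by
  rw [mem_link] at hA
  ext H
  simp only [mem_link, ← union_assoc, inter_union_distrib_left, union_eq_empty]
  constructor
  · rintro ⟨⟨hH, -, hHF⟩, ⟨-, hHAF, -⟩, hHA⟩
    exact ⟨hH, hHAF, hHA, hHF⟩
  · rintro ⟨hH, hHAF, hHA, hHF⟩
    refine ⟨⟨hH, hc.2 _ hHAF _ ?_, hHF⟩, ⟨hc.2 _ hHAF _ ?_, hHAF, ?_⟩, hHA⟩
    · exact union_subset_union_left subset_union_left
    · exact subset_union_left
    · rw [union_inter_distrib_right, hHF, hA.2.2, union_empty]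

lemma exists_mem_facets_superset {F : Finset V} (hF : F ∈ Δ) : ∃ M ∈ facets Δ, F ⊆ M := by
  obtain ⟨M, hM, hmax⟩ := exists_max_image (Δ.filter (F ⊆ ·)) card ⟨F, by simpa using hF⟩
  rw [mem_filter] at hM
  refine ⟨M, mem_facets.2 ⟨hM.1, fun H hH hMH => ?_⟩, hM.2⟩
  exact eq_of_subset_of_card_le hMH (hmax H (mem_filter.2 ⟨hH, hM.2.trans hMH⟩))

lemma maxCard_link (hc : IsComplex Δ) (hpure : ∀ F ∈ facets Δ, F.card = maxCard Δ)
    {A : Finset V} (hA : A ∈ Δ) : maxCard (link Δ A) = maxCard Δ - A.card := by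
  apply le_antisymm
  · refine Finset.sup_le fun H hH => ?_
    obtain ⟨-, hHA, hdisj⟩ := mem_link.1 hH
    have := le_sup (f := card) hHA
    rw [card_union_of_disjoint (disjoint_iff_inter_eq_empty.2 hdisj)] at this
    unfold maxCard
    omega
  · obtain ⟨M, hM, hAM⟩ := exists_mem_facets_superset hA
    have hMA : M \ A ∈ link Δ A := by
      have hMΔ := (mem_facets.1 hM).1
      simpa [sdiff_union_of_subset hAM] using ⟨hc.2 M hMΔ _ sdiff_subset, hMΔ⟩
    have := le_sup (f := card) hMA
    rwa [card_sdiff_of_subset hAM, hpure M hM] at this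

lemma notMem_of_mem_link_singleton {x : V} {A : Finset V} (hA : A ∈ link Δ {x}) : x ∉ A :=
  fun hx => by simpa [(mem_link.1 hA).2.2] using mem_inter.2 ⟨hx, mem_singleton_self x⟩

lemma erase_mem_link (hc : IsComplex Δ) {A : Finset V} (hA : A ∈ Δ) {x : V} (hx : x ∈ A) :
    A.erase x ∈ link Δ {x} := by
  simpa [insert_erase hx, union_comm, ← insert_eq] using ⟨hc.2 A hA _ (erase_subset x A), hA⟩

lemma insert_mem_facets_of_mem_facets_link (hc : IsComplex Δ) {x : V} {A : Finset V}
    (hA : A ∈ facets (link Δ {x})) : insert x A ∈ facets Δ := by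
  obtain ⟨hAl, hAmax⟩ := mem_facets.1 hA
  have hxA := notMem_of_mem_link_singleton hAl
  refine mem_facets.2 ⟨?_, fun C hC hAC => ?_⟩
  · simpa [union_comm, ← insert_eq] using (mem_link.1 hAl).2.1
  have hxC : x ∈ C := hAC (mem_insert_self x A)
  have hAC' : A ⊆ C.erase x := subset_erase.2 ⟨(subset_insert x A).trans hAC, hxA⟩
  rw [hAmax _ (erase_mem_link hc hC hxC) hAC', insert_erase hxC]

lemma erase_mem_facets_link (hc : IsComplex Δ) {F : Finset V} (hF : F ∈ facets Δ) {x : V}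
    (hx : x ∈ F) : F.erase x ∈ facets (link Δ {x}) := by
  obtain ⟨hFΔ, hFmax⟩ := mem_facets.1 hF
  refine mem_facets.2 ⟨erase_mem_link hc hFΔ hx, fun B hB hFB => ?_⟩
  have hBx : insert x B ∈ Δ := by simpa [union_comm, ← insert_eq] using (mem_link.1 hB).2.1
  have hF_eq := hFmax _ hBx (by simpa [insert_erase hx] using insert_subset_insert x hFB)
  rw [hF_eq, erase_insert (notMem_of_mem_link_singleton hB)]

lemma pure_link (hc : IsComplex Δ) (hpure : ∀ F ∈ facets Δ, F.card = maxCard Δ) {x : V}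
    (hx : {x} ∈ Δ) : ∀ A ∈ facets (link Δ {x}), A.card = maxCard (link Δ {x}) := by
  intro A hA
  have := hpure _ (insert_mem_facets_of_mem_facets_link hc hA)
  rw [card_insert_of_notMem (notMem_of_mem_link_singleton (mem_facets.1 hA).1)] at this
  rw [maxCard_link hc hpure hx, card_singleton]
  omega

def oneSkeleton (Δ : Finset (Finset V)) : SimpleGraph V :=
  SimpleGraph.fromRel fun a b => ({a, b} : Finset V) ∈ Δ

/-- Unlike `ComplexConnected`, this only asks that the vertices of `Δ` be joined by edge paths,
which is the right notion for links. -/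
def VertexConnected (Δ : Finset (Finset V)) : Prop :=
  ∀ x y : V, {x} ∈ Δ → {y} ∈ Δ → (oneSkeleton Δ).Reachable x y

def FacetAdj (Δ : Finset (Finset V)) (A B : Finset V) : Prop :=
  A ∈ facets Δ ∧ B ∈ facets Δ ∧ (A ∩ B).card = maxCard Δ - 1

lemma exists_mem_facets_of_adj {a b : V} (h : (oneSkeleton Δ).Adj a b) :
    ∃ M ∈ facets Δ, a ∈ M ∧ b ∈ M := by
  obtain ⟨-, hab | hba⟩ := h
  · obtain ⟨M, hM, habM⟩ := exists_mem_facets_superset hab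
    exact ⟨M, hM, habM (by simp), habM (by simp)⟩
  · obtain ⟨M, hM, hbaM⟩ := exists_mem_facets_superset hba
    exact ⟨M, hM, hbaM (by simp), hbaM (by simp)⟩

lemma connCodimOne_of_maxCard_le_one (hmax : maxCard Δ ≤ 1) : ConnCodimOne Δ := by
  intro F hF H hH
  by_cases hFH : F = H
  · rw [hFH]
  have hF1 : F.card ≤ 1 := (le_sup (f := card) (mem_facets.1 hF).1).trans hmax
  have hFH0 : (F ∩ H).card = 0 := by
    by_contra h
    have hFsub : F ∩ H = F := eq_of_subset_of_card_le inter_subset_left (by omega)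
    exact hFH ((mem_facets.1 hF).2 H (mem_facets.1 hH).1 (hFsub ▸ inter_subset_right))
  exact .single ⟨hF, hH, by omega⟩

lemma FacetAdj.insert_of_link (hc : IsComplex Δ) (hpure : ∀ F ∈ facets Δ, F.card = maxCard Δ)
    (hd : 2 ≤ maxCard Δ) {x : V} (hx : {x} ∈ Δ) {A B : Finset V}
    (h : FacetAdj (link Δ {x}) A B) : FacetAdj Δ (insert x A) (insert x B) := by
  obtain ⟨hA, hB, hAB⟩ := h
  refine ⟨insert_mem_facets_of_mem_facets_link hc hA,
    insert_mem_facets_of_mem_facets_link hc hB, ?_⟩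
  have hxA := notMem_of_mem_link_singleton (mem_facets.1 hA).1
  rw [← insert_inter_distrib, card_insert_of_notMem (fun h => hxA (mem_inter.1 h).1), hAB,
    maxCard_link hc hpure hx, card_singleton]
  omega

lemma reflTransGen_facetAdj_of_mem_of_mem (hc : IsComplex Δ)
    (hpure : ∀ F ∈ facets Δ, F.card = maxCard Δ) (hd : 2 ≤ maxCard Δ) {x : V}
    (hx : ConnCodimOne (link Δ {x})) {F H : Finset V} (hF : F ∈ facets Δ) (hH : H ∈ facets Δ)
    (hxF : x ∈ F) (hxH : x ∈ H) : Relation.ReflTransGen (FacetAdj Δ) F H := by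
  have hxΔ : {x} ∈ Δ := hc.2 F (mem_facets.1 hF).1 {x} (singleton_subset_iff.2 hxF)
  have hpath := (hx _ (erase_mem_facets_link hc hF hxF) _ (erase_mem_facets_link hc hH hxH)).lift
    (insert x) fun A B => FacetAdj.insert_of_link hc hpure hd hxΔ
  rwa [Function.onFun, insert_erase hxF, insert_erase hxH] at hpath

theorem connCodimOne_of_connCodimOne_link_singleton (hc : IsComplex Δ)
    (hpure : ∀ F ∈ facets Δ, F.card = maxCard Δ) (hd : 2 ≤ maxCard Δ)
    (hconn : VertexConnected Δ) (hlink : ∀ x, {x} ∈ Δ → ConnCodimOne (link Δ {x})) :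
    ConnCodimOne Δ := by
  have hvertex : ∀ {x : V} {M : Finset V}, M ∈ facets Δ → x ∈ M → {x} ∈ Δ := fun hM hxM =>
    hc.2 _ (mem_facets.1 hM).1 _ (singleton_subset_iff.2 hxM)
  have hstar : ∀ x F H, F ∈ facets Δ → H ∈ facets Δ → x ∈ F → x ∈ H →
      Relation.ReflTransGen (FacetAdj Δ) F H := fun x F H hF hH hxF hxH =>
    reflTransGen_facetAdj_of_mem_of_mem hc hpure hd (hlink x (hvertex hF hxF)) hF hH hxF hxH
  intro F hF H hH
  obtain ⟨x, hxF⟩ : F.Nonempty := card_pos.1 (by rw [hpure F hF]; omega)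
  obtain ⟨y, hyH⟩ : H.Nonempty := card_pos.1 (by rw [hpure H hH]; omega)
  have hxy := (SimpleGraph.reachable_iff_reflTransGen x y).1
    (hconn x y (hvertex hF hxF) (hvertex hH hyH))
  suffices ∀ z, Relation.ReflTransGen (oneSkeleton Δ).Adj x z →
      ∀ K ∈ facets Δ, z ∈ K → Relation.ReflTransGen (FacetAdj Δ) F K from this y hxy H hH hyH
  intro z hxz
  induction hxz with
  | refl => exact fun K hK hxK => hstar x F K hF hK hxF hxK
  | tail _ hbc ih =>
    intro K hK hcK
    obtain ⟨M, hM, hbM, hcM⟩ := exists_mem_facets_of_adj hbc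
    exact (ih M hM hbM).trans (hstar _ M K hM hK hcM hcK)

theorem connCodimOne_of_vertexConnected_link (hc : IsComplex Δ)
    (hpure : ∀ F ∈ facets Δ, F.card = maxCard Δ)
    (hlink : ∀ A ∈ Δ, A.card + 2 ≤ maxCard Δ → VertexConnected (link Δ A)) :
    ConnCodimOne Δ := by
  induction hd : maxCard Δ using Nat.strong_induction_on generalizing Δ with
  | _ d ih =>
  rcases Nat.lt_or_ge d 2 with hd2 | hd2
  · exact connCodimOne_of_maxCard_le_one (by omega)
  refine connCodimOne_of_connCodimOne_link_singleton hc hpure (by omega)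
    (by simpa using hlink ∅ hc.1 (by rw [card_empty]; omega)) fun x hx => ?_
  have hml : maxCard (link Δ {x}) = d - 1 := by simp [maxCard_link hc hpure hx, hd]
  refine ih _ (by omega) (hc.link hx) (pure_link hc hpure hx) (fun A hA hAcard => ?_) hml
  have hxA := notMem_of_mem_link_singleton hA
  rw [link_link hc hA]
  refine hlink _ (mem_link.1 hA).2.1 ?_
  rw [union_comm, ← insert_eq, card_insert_of_notMem hxA]
  omega

end Complex

section Homology

variable {V : Type*} [LinearOrder V] {k : Type*} [Field k]

lemma bdry_single (F : Finset V) (c : k) :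
    bdry k (Finsupp.single F c) =
      c • ∑ v ∈ F, (-1 : k) ^ (F.filter (· < v)).card • Finsupp.single (F.erase v) 1 := by
  simp [bdry]

lemma bdry_single_singleton (x : V) :
    bdry k (Finsupp.single {x} (1 : k)) = Finsupp.single ∅ 1 := by
  simp [bdry_single, filter_singleton]

lemma bdry_single_pair {a b : V} (hab : a < b) :
    bdry k (Finsupp.single {a, b} (1 : k)) = Finsupp.single {b} 1 - Finsupp.single {a} 1 := by
  have hfa : ({a, b} : Finset V).filter (· < a) = ∅ := by
    ext w; simp only [mem_filter, mem_insert, mem_singleton, notMem_empty, iff_false]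
    rintro ⟨rfl | rfl, h⟩ <;> order
  have hfb : ({a, b} : Finset V).filter (· < b) = {a} := by
    ext w; simp only [mem_filter, mem_insert, mem_singleton]
    constructor
    · rintro ⟨rfl | rfl, h⟩ <;> order
    · rintro rfl; exact ⟨Or.inl rfl, hab⟩
  rw [bdry_single, sum_pair hab.ne, hfa, hfb, erase_insert (by simpa using hab.ne),
    erase_insert_of_ne hab.ne, erase_singleton, insert_empty]
  simp [sub_eq_add_neg]

theorem vertexConnected_of_hVanish_one {Δ : Finset (Finset V)} (hv : HVanish k Δ 1) :
    VertexConnected Δ := by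
  intro x y hx hy
  by_contra hxy
  /- `φ` counts the coefficients of a 0-chain on the vertices of the component of `x`;
  it kills boundaries of edges but not the cycle `x - y`. -/
  let χ : Finset V → k := fun F => if ∃ z, F = {z} ∧ (oneSkeleton Δ).Reachable x z then 1 else 0
  have hχ : ∀ z, χ {z} = if (oneSkeleton Δ).Reachable x z then 1 else 0 := by simp [χ]
  let φ := Finsupp.linearCombination k χ
  have hker : chainsSub k Δ 2 ≤ LinearMap.ker (φ ∘ₗ bdry k) := by
    refine Submodule.span_le.2 ?_
    rintro _ ⟨F, hF, hFcard, rfl⟩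
    obtain ⟨a, b, hab, rfl⟩ := card_eq_two.1 hFcard
    have hadj : (oneSkeleton Δ).Adj a b := ⟨hab, Or.inl (by convert hF)⟩
    have hreach : (oneSkeleton Δ).Reachable x a ↔ (oneSkeleton Δ).Reachable x b :=
      ⟨fun h => h.trans hadj.reachable, fun h => h.trans hadj.symm.reachable⟩
    rcases hab.lt_or_gt with h | h
    · simp [bdry_single_pair h, φ, hχ, hreach]
    · simp [pair_comm, bdry_single_pair h, φ, hχ, hreach]
  let ω : Finset V →₀ k := Finsupp.single {x} 1 - Finsupp.single {y} 1
  have hω : ω ∈ chainsSub k Δ 1 :=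
    sub_mem (Submodule.subset_span ⟨{x}, hx, card_singleton x, rfl⟩)
      (Submodule.subset_span ⟨{y}, hy, card_singleton y, rfl⟩)
  obtain ⟨η, hη, hηω⟩ := hv ω hω (by simp [ω, bdry_single_singleton])
  have hφω := hker hη
  rw [LinearMap.mem_ker, LinearMap.comp_apply, hηω] at hφω
  simp [ω, φ, hχ, hxy] at hφω

end Homology

section Transfer

variable {V W : Type*} (f : V ↪ W) (Γ : Finset (Finset V))

lemma link_image_map (B : Finset V) :
    link (Γ.image (map f)) (B.map f) = (link Γ B).image (map f) := by
  ext S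
  simp only [mem_link, mem_image]
  constructor
  · rintro ⟨⟨S', hS', rfl⟩, ⟨U, hU, hUeq⟩, hdisj⟩
    rw [← map_union] at hUeq
    rw [← map_inter, map_eq_empty] at hdisj
    exact ⟨S', ⟨hS', map_injective f hUeq ▸ hU, hdisj⟩, rfl⟩
  · rintro ⟨S', ⟨hS', hU, hdisj⟩, rfl⟩
    exact ⟨⟨S', hS', rfl⟩, ⟨_, hU, map_union _ _⟩, by rw [← map_inter, hdisj, map_empty]⟩

lemma maxCard_image_map : maxCard (Γ.image (map f)) = maxCard Γ := by
  simp [maxCard, sup_image, Function.comp_def]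

lemma exists_singleton_mem_of_singleton_mem_image_map {x : W} (hx : {x} ∈ Γ.image (map f)) :
    ∃ x', {x'} ∈ Γ ∧ f x' = x := by
  obtain ⟨S, hS, hSx⟩ := mem_image.1 hx
  obtain ⟨x', rfl⟩ := card_eq_one.1 (by rw [← card_map f, hSx, card_singleton] : S.card = 1)
  exact ⟨x', hS, singleton_inj.1 (by rw [← hSx, map_singleton])⟩

lemma VertexConnected.image_map {Γ : Finset (Finset V)} (h : VertexConnected Γ) :
    VertexConnected (Γ.image (map f)) := by
  let φ : oneSkeleton Γ →g oneSkeleton (Γ.image (map f)) :=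
    ⟨f, fun {a b} ⟨hab, hΓ⟩ => ⟨f.injective.ne hab,
      hΓ.imp (fun h => mem_image.2 ⟨_, h, by simp⟩) (fun h => mem_image.2 ⟨_, h, by simp⟩)⟩⟩
  intro x y hx hy
  obtain ⟨x', hx', rfl⟩ := exists_singleton_mem_of_singleton_mem_image_map f Γ hx
  obtain ⟨y', hy', rfl⟩ := exists_singleton_mem_of_singleton_mem_image_map f Γ hy
  exact (h x' y' hx' hy').map φ

end Transfer

section Graph

variable {V : Type*} [Fintype V] (G : SimpleGraph V)

lemma mem_indepC {S : Finset V} : S ∈ indepC G ↔ ∀ a ∈ S, ∀ b ∈ S, ¬ G.Adj a b := by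
  simp [indepC]

lemma isComplex_indepC : IsComplex (indepC G) :=
  ⟨by simp [mem_indepC], fun _ hF _ hHF => (mem_indepC G).2 fun a ha b hb =>
    (mem_indepC G).1 hF a (hHF ha) b (hHF hb)⟩

lemma link_indepC_singleton (v : V) :
    link (indepC G) {v} =
      (indepC (locG G {v})).image (map (Function.Embedding.subtype (· ∈ locSet G {v}))) := by
  ext S
  constructor
  · intro hS
    obtain ⟨hS, hSv, hdisj⟩ := mem_link.1 hS
    have hloc : ∀ x ∈ S, x ∈ locSet G {v} := fun x hx => by
      refine ⟨fun hxv => ?_, fun u hu hxu => ?_⟩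
      · simpa [hdisj] using mem_inter.2 ⟨hx, hxv⟩
      · exact (mem_indepC G).1 hSv x (mem_union_left _ hx) u (mem_union_right _ hu) hxu
    refine mem_image.2 ⟨S.subtype _, (mem_indepC _).2 fun a ha b hb hab => ?_,
      subtype_map_of_mem hloc⟩
    exact (mem_indepC G).1 hS a (mem_subtype.1 ha) b (mem_subtype.1 hb) hab
  · intro hS
    obtain ⟨T, hT, rfl⟩ := mem_image.1 hS
    have hind : ∀ a ∈ T, ∀ b ∈ T, ¬ G.Adj a b := (mem_indepC _).1 hT
    have hvT : ∀ a : locSet G {v}, ¬ G.Adj a v := fun a => a.2.2 v (mem_singleton_self v)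
    simp only [mem_link, mem_indepC, mem_union, mem_map, Function.Embedding.subtype_apply,
      mem_singleton]
    refine ⟨?_, ?_, eq_empty_of_forall_notMem fun x hx => ?_⟩
    · rintro _ ⟨a, ha, rfl⟩ _ ⟨b, hb, rfl⟩
      exact hind a ha b hb
    · rintro _ (⟨a, ha, rfl⟩ | rfl) _ (⟨b, hb, rfl⟩ | rfl)
      exacts [hind a ha b hb, hvT a, fun h => hvT b h.symm, G.irrefl]
    · rw [mem_inter, mem_map, mem_singleton] at hx
      obtain ⟨⟨a, -, rfl⟩, hav⟩ := hx
      exact a.2.1 (mem_singleton.2 hav)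

lemma exists_link_indepC_eq_image_link {A : Finset V} (hA : A ∈ indepC G) {v : V} (hv : v ∈ A) :
    ∃ B ∈ indepC (locG G {v}), link (indepC G) A =
      (link (indepC (locG G {v})) B).image (map (Function.Embedding.subtype _)) := by
  have hc := isComplex_indepC G
  have hAv := erase_mem_link hc hA hv
  obtain ⟨B, hB, hBA⟩ := mem_image.1 (link_indepC_singleton G v ▸ hAv)
  refine ⟨B, hB, ?_⟩
  rw [← link_image_map, hBA, ← link_indepC_singleton, link_link hc hAv, union_comm,
    ← insert_eq, insert_erase hv]

theorem vertexConnected_link_indepC [LinearOrder V] {k : Type*} [Field k] {v : V}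
    (hcm : IsCM k (indepC (locG G {v}))) {A : Finset V} (hA : A ∈ indepC G) (hv : v ∈ A)
    (h2 : 2 ≤ maxCard (link (indepC G) A)) : VertexConnected (link (indepC G) A) := by
  obtain ⟨B, hB, hlink⟩ := exists_link_indepC_eq_image_link G hA hv
  rw [hlink, maxCard_image_map] at h2
  rw [hlink]
  refine (vertexConnected_of_hVanish_one (hcm B hB 1 ?_)).image_map _
  unfold dimC
  omega

end Graph

theorem stmt_15_general {V : Type*} [Fintype V] [LinearOrder V] (k : Type*) [Field k]
    (G : SimpleGraph V) (hwc : WellCovered G)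
    (hlcm : ∀ v : V, IsCM k (indepC (locG G {v})))
    (hconn : ComplexConnected (indepC G)) :
    ConnCodimOne (indepC G) := by
  have hc := isComplex_indepC G
  have hpure : ∀ F ∈ facets (indepC G), F.card = maxCard (indepC G) := fun F hF =>
    hwc F (mem_facets.1 hF).1 (mem_facets.1 hF).2
  refine connCodimOne_of_vertexConnected_link hc hpure fun A hA hAcard => ?_
  rcases A.eq_empty_or_nonempty with rfl | ⟨v, hv⟩
  · rw [link_empty]
    exact fun x y _ _ => hconn.preconnected x y
  · refine vertexConnected_link_indepC G (hlcm v) hA hv ?_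
    rw [maxCard_link hc hpure hA]
    omega

theorem stmt_15 {V : Type*} [Fintype V] [LinearOrder V] (k : Type*) [Field k]
    (G : SimpleGraph V) (hwc : WellCovered G) (hα : 2 ≤ indNum G)
    (hlcm : ∀ v : V, IsCM k (indepC (locG G {v})))
    (hconn : ComplexConnected (indepC G)) :
    ConnCodimOne (indepC G) :=
  stmt_15_general k G hwc hlcm hconn
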